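/- arXiv:1601.03637 — 6 statements merged into one kernel-verified Lean document; each statement's English description precedes it below -/
import Mathlib

section
/- Let ‖·‖ be a convex functional on ℝ^m (i.e., subadditive and positively homogeneous, so that ‖λu + (1−λ)v‖ ≤ λ‖u‖ + (1−λ)‖v‖ for λ ∈ [0,1]). Suppose f = f_1 + ... + f_n where each f_i : ℝ^m → ℝ^m satisfies ‖u + τ f_i(u)‖ ≤ ‖u‖ for all u and all 0 ≤ τ ≤ ε_i, with ε_i > 0. Then ‖u + τ f(u)‖ ≤ ‖u‖ for all u and all 0 ≤ τ ≤ ε, where ε = (∑_{i=1}^n 1/ε_i)^{-1}. -/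
/-!
Writing `S = ∑ i, 1/ε i`, the forward Euler step for `f = ∑ i, f i` is the convex combination
`u + τ f(u) = (1 - τS) u + ∑ i, (τ/ε i) (u + ε i f_i(u))`, whose weights are nonnegative exactly
when `τ ≤ 1/S`. Convexity of `N` and the forward Euler condition of each `f i` at its own
threshold `ε i` then bound `N (u + τ f(u))` by `(1 - τS) N u + ∑ i, (τ/ε i) N u = N u`.
-/

open Finset

def ForwardEulerContractive {E : Type*} [AddCommGroup E] [Module ℝ E]
    (N : E → ℝ) (g : E → E) (ε : ℝ) : Prop :=
  ∀ (u : E) (τ : ℝ), 0 ≤ τ → τ ≤ ε → N (u + τ • g u) ≤ N u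

theorem add_smul_sum_eq_smul_add_sum_smul {ι 𝕜 E : Type*} [Field 𝕜] [AddCommGroup E]
    [Module 𝕜 E] (s : Finset ι) (ε : ι → 𝕜) (hε : ∀ i ∈ s, ε i ≠ 0) (u : E) (v : ι → E)
    (τ : 𝕜) :
    u + τ • ∑ i ∈ s, v i =
      (1 - τ * ∑ i ∈ s, (ε i)⁻¹) • u + ∑ i ∈ s, (τ * (ε i)⁻¹) • (u + ε i • v i) := by
  have hterm : ∀ i ∈ s, (τ * (ε i)⁻¹) • (u + ε i • v i) = (τ * (ε i)⁻¹) • u + τ • v i := by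
    intro i hi
    rw [smul_add, smul_smul, mul_assoc, inv_mul_cancel₀ (hε i hi), mul_one]
  rw [sum_congr rfl hterm, sum_add_distrib, ← sum_smul, ← smul_sum, mul_sum, sub_smul, one_smul]
  abel

section Sublinear

variable {E : Type*} [AddCommGroup E] [Module ℝ E] {N : E → ℝ}

theorem map_sum_smul_le_of_sublinear (hsub : ∀ u v, N (u + v) ≤ N u + N v)
    (hhom : ∀ (c : ℝ) u, 0 ≤ c → N (c • u) = c * N u) {ι : Type*} (s : Finset ι)
    (c : ι → ℝ) (hc : ∀ i ∈ s, 0 ≤ c i) (v : ι → E) :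
    N (∑ i ∈ s, c i • v i) ≤ ∑ i ∈ s, c i * N (v i) := by
  have hN0 : N 0 ≤ 0 := by simpa using (hhom 0 0 le_rfl).le
  calc N (∑ i ∈ s, c i • v i) ≤ ∑ i ∈ s, N (c i • v i) := le_sum_of_subadditive N hN0 hsub _ _
    _ = ∑ i ∈ s, c i * N (v i) := sum_congr rfl fun i hi => hhom _ _ (hc i hi)

theorem ForwardEulerContractive.sum (hsub : ∀ u v, N (u + v) ≤ N u + N v)
    (hhom : ∀ (c : ℝ) u, 0 ≤ c → N (c • u) = c * N u) {ι : Type*} {s : Finset ι}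
    {f : ι → E → E} {ε : ι → ℝ} (hε : ∀ i ∈ s, 0 < ε i)
    (hf : ∀ i ∈ s, ForwardEulerContractive N (f i) (ε i)) :
    ForwardEulerContractive N (fun u => ∑ i ∈ s, f i u) (∑ i ∈ s, (ε i)⁻¹)⁻¹ := by
  intro u τ hτ hτε
  set S := ∑ i ∈ s, (ε i)⁻¹
  have hw : ∀ i ∈ s, 0 ≤ τ * (ε i)⁻¹ := fun i hi => mul_nonneg hτ (inv_pos.2 (hε i hi)).le
  have hτS : τ * S ≤ 1 := by
    have hS : 0 ≤ S := sum_nonneg fun i hi => (inv_pos.2 (hε i hi)).le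
    rw [mul_comm]
    exact mul_le_of_le_inv_mul₀ zero_le_one hS (by simpa using hτε)
  rw [add_smul_sum_eq_smul_add_sum_smul s ε (fun i hi => (hε i hi).ne')]
  calc N ((1 - τ * S) • u + ∑ i ∈ s, (τ * (ε i)⁻¹) • (u + ε i • f i u))
      ≤ (1 - τ * S) * N u + ∑ i ∈ s, (τ * (ε i)⁻¹) * N (u + ε i • f i u) :=
        (hsub _ _).trans <| add_le_add (hhom _ _ (sub_nonneg.2 hτS)).le
          (map_sum_smul_le_of_sublinear hsub hhom s _ hw _)
    _ ≤ (1 - τ * S) * N u + ∑ i ∈ s, (τ * (ε i)⁻¹) * N u := by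
        gcongr with i hi
        · exact hw i hi
        · exact hf i hi u (ε i) (hε i hi).le le_rfl
    _ = N u := by rw [← sum_mul, ← mul_sum]; ring

end Sublinear

/-- Harmonic-mean combination of forward Euler conditions: if each `f i` satisfies a
forward Euler condition with threshold `ε i` for a convex functional `N`, then
`f = ∑ i, f i` satisfies the forward Euler condition with threshold `(∑ i, 1/ε i)⁻¹`. -/
theorem stmt_2 (m n : ℕ) (N : (Fin m → ℝ) → ℝ)
    (hsub : ∀ u v : Fin m → ℝ, N (u + v) ≤ N u + N v)
    (hhom : ∀ (c : ℝ) (u : Fin m → ℝ), 0 ≤ c → N (c • u) = c * N u)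
    (f : Fin n → (Fin m → ℝ) → (Fin m → ℝ))
    (ε : Fin n → ℝ) (hε : ∀ i, 0 < ε i)
    (hFE : ∀ i (u : Fin m → ℝ) (τ : ℝ), 0 ≤ τ → τ ≤ ε i → N (u + τ • f i u) ≤ N u) :
    ∀ (u : Fin m → ℝ) (τ : ℝ), 0 ≤ τ → τ ≤ (∑ i, (ε i)⁻¹)⁻¹ →
      N (u + τ • ∑ i, f i u) ≤ N u :=
  ForwardEulerContractive.sum hsub hhom (fun i _ => hε i) (fun i _ => hFE i)
end

section
/- Consider a k-step perturbed linear multistep method u_n = ∑_{j=0}^{k-1} α_j u_{n−k+j} + Δt ∑_{j=0}^{k} (β_j F(u_{n−k+j}) − β̃_j F̃(u_{n−k+j})), with ∑_{j=0}^{k-1} α_j = 1. Suppose F satisfies ‖u + Δt F(u)‖ ≤ ‖u‖ for 0 ≤ Δt ≤ Δt_FE, F̃ satisfies ‖u − Δt F̃(u)‖ ≤ ‖u‖ for 0 ≤ Δt ≤ Δ̃t_FE, and the SSP conditions hold: β_j, β̃_j ≥ 0 for all j, and α_j − C β_j − C̃ β̃_j ≥ 0 for j = 0,...,k−1, for constants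 C, C̃ ≥ 0. Then for any step size Δt ≤ min{C Δt_FE, C̃ Δ̃t_FE}, the numerical solution satisfies ‖u_n‖ ≤ max{‖u_{n−1}‖, ..., ‖u_{n−k}‖}. -/
/-! The method is written in Shu–Osher form: splitting `α_j = (α_j - Cβ_j - C̃β̃_j) + Cβ_j + C̃β̃_j`,
each explicit term becomes a nonnegative combination of `u_j`, a forward Euler step of `F` with
step `Δt/C` and a forward Euler step of `-F̃` with step `Δt/C̃`, so its size is at most
`α_j ‖u_j‖`; since `∑ α_j = 1` the explicit part is bounded by `max_j ‖u_j‖`. The implicit term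
is treated the same way after adding `(Cβ_k + C̃β̃_k) u_n` to both sides of the method. -/

open Finset

structure IsSublinear {E : Type*} [AddCommGroup E] [Module ℝ E] (N : E → ℝ) : Prop where
  add_le : ∀ u v, N (u + v) ≤ N u + N v
  smul_of_nonneg : ∀ (c : ℝ) u, 0 ≤ c → N (c • u) = c * N u

namespace IsSublinear

variable {E : Type*} [AddCommGroup E] [Module ℝ E] {N : E → ℝ}

theorem map_zero (hN : IsSublinear N) : N 0 = 0 := by
  simpa using hN.smul_of_nonneg 0 0 le_rfl

theorem map_sum_le (hN : IsSublinear N) {ι : Type*} (s : Finset ι) (g : ι → E) :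
    N (∑ i ∈ s, g i) ≤ ∑ i ∈ s, N (g i) :=
  le_sum_of_subadditive N hN.map_zero.le hN.add_le s g

/-- A forward Euler step `c • u + d • F u` with `d ≤ c T` is a forward Euler step of size `d / c`
scaled by `c`; for `c = 0` it degenerates to `0`. -/
theorem map_smul_add_smul_le (hN : IsSublinear N) {F : E → E} {T : ℝ}
    (hF : ∀ u τ, 0 ≤ τ → τ ≤ T → N (u + τ • F u) ≤ N u)
    {c d : ℝ} (hc : 0 ≤ c) (hd : 0 ≤ d) (hdc : d ≤ c * T) (u : E) :
    N (c • u + d • F u) ≤ c * N u := by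
  rcases hc.eq_or_lt with rfl | hc
  · obtain rfl : d = 0 := by linarith
    simp [hN.map_zero]
  · have hsplit : c • u + d • F u = c • (u + (d / c) • F u) := by
      rw [smul_add, smul_smul, mul_div_cancel₀ _ hc.ne']
    have hτ : d / c ≤ T := (div_le_iff₀' hc).mpr hdc
    rw [hsplit, hN.smul_of_nonneg _ _ hc.le]
    exact mul_le_mul_of_nonneg_left (hF u _ (div_nonneg hd hc.le) hτ) hc.le

theorem map_euler_pair_le (hN : IsSublinear N) {F G : E → E} {T T' : ℝ}
    (hF : ∀ u τ, 0 ≤ τ → τ ≤ T → N (u + τ • F u) ≤ N u)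
    (hG : ∀ u τ, 0 ≤ τ → τ ≤ T' → N (u - τ • G u) ≤ N u)
    {C C' β β' Δt : ℝ} (hC : 0 ≤ C) (hC' : 0 ≤ C') (hβ : 0 ≤ β) (hβ' : 0 ≤ β')
    (hΔt0 : 0 ≤ Δt) (hΔt : Δt ≤ C * T) (hΔt' : Δt ≤ C' * T') (u : E) :
    N ((C * β + C' * β') • u + Δt • (β • F u - β' • G u)) ≤ (C * β + C' * β') * N u := by
  have hG' : ∀ u τ, 0 ≤ τ → τ ≤ T' → N (u + τ • (fun v => -G v) u) ≤ N u := by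
    simpa only [smul_neg, ← sub_eq_add_neg] using hG
  have hsplit : (C * β + C' * β') • u + Δt • (β • F u - β' • G u) =
      ((C * β) • u + (Δt * β) • F u) + ((C' * β') • u + (Δt * β') • (fun v => -G v) u) := by
    module
  have hFstep := hN.map_smul_add_smul_le hF (mul_nonneg hC hβ) (mul_nonneg hΔt0 hβ)
    (by nlinarith) u
  have hGstep := hN.map_smul_add_smul_le hG' (mul_nonneg hC' hβ') (mul_nonneg hΔt0 hβ')
    (by nlinarith) u
  rw [hsplit]
  linarith [hN.add_le ((C * β) • u + (Δt * β) • F u)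
    ((C' * β') • u + (Δt * β') • (fun v => -G v) u)]

theorem map_explicit_step_le (hN : IsSublinear N) {F G : E → E} {T T' : ℝ}
    (hF : ∀ u τ, 0 ≤ τ → τ ≤ T → N (u + τ • F u) ≤ N u)
    (hG : ∀ u τ, 0 ≤ τ → τ ≤ T' → N (u - τ • G u) ≤ N u)
    {C C' α β β' Δt : ℝ} (hC : 0 ≤ C) (hC' : 0 ≤ C') (hβ : 0 ≤ β) (hβ' : 0 ≤ β')
    (hssp : 0 ≤ α - C * β - C' * β')
    (hΔt0 : 0 ≤ Δt) (hΔt : Δt ≤ C * T) (hΔt' : Δt ≤ C' * T') (u : E) :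
    N (α • u + Δt • (β • F u - β' • G u)) ≤ α * N u := by
  have hsplit : α • u + Δt • (β • F u - β' • G u) = (α - C * β - C' * β') • u +
      ((C * β + C' * β') • u + Δt • (β • F u - β' • G u)) := by
    module
  rw [hsplit]
  linarith [hN.add_le ((α - C * β - C' * β') • u)
      ((C * β + C' * β') • u + Δt • (β • F u - β' • G u)),
    hN.smul_of_nonneg _ u hssp, hN.map_euler_pair_le hF hG hC hC' hβ hβ' hΔt0 hΔt hΔt' u]

theorem le_of_implicit_step (hN : IsSublinear N) {F G : E → E} {T T' : ℝ}
    (hF : ∀ u τ, 0 ≤ τ → τ ≤ T → N (u + τ • F u) ≤ N u)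
    (hG : ∀ u τ, 0 ≤ τ → τ ≤ T' → N (u - τ • G u) ≤ N u)
    {C C' β β' Δt : ℝ} (hC : 0 ≤ C) (hC' : 0 ≤ C') (hβ : 0 ≤ β) (hβ' : 0 ≤ β')
    (hΔt0 : 0 ≤ Δt) (hΔt : Δt ≤ C * T) (hΔt' : Δt ≤ C' * T') {u v : E}
    (hstep : u = v + Δt • (β • F u - β' • G u)) :
    N u ≤ N v := by
  set p := C * β + C' * β'
  have hp : 0 ≤ p := by positivity
  have hshift : (1 + p) • u = v + (p • u + Δt • (β • F u - β' • G u)) := by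
    linear_combination (norm := module) hstep
  have hbound := hN.add_le v (p • u + Δt • (β • F u - β' • G u))
  rw [← hshift, hN.smul_of_nonneg _ _ (by positivity)] at hbound
  linarith [hN.map_euler_pair_le hF hG hC hC' hβ hβ' hΔt0 hΔt hΔt' u]

end IsSublinear

theorem sum_mul_le_sup'_of_sum_eq_one {ι : Type*} {s : Finset ι} {w f : ι → ℝ}
    (hw₀ : ∀ i ∈ s, 0 ≤ w i) (hw₁ : ∑ i ∈ s, w i = 1) (hs : s.Nonempty) :
    ∑ i ∈ s, w i * f i ≤ s.sup' hs f := by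
  have h := centerMass_le_sup (f := f) hw₀ (hw₁ ▸ one_pos)
  simpa only [centerMass, hw₁, inv_one, smul_eq_mul, one_mul] using h

theorem stmt_4_general (m k : ℕ) (hk : 0 < k) (N : (Fin m → ℝ) → ℝ)
    (hsub : ∀ u v : Fin m → ℝ, N (u + v) ≤ N u + N v)
    (hhom : ∀ (c : ℝ) (u : Fin m → ℝ), 0 ≤ c → N (c • u) = c * N u)
    (F Ft : (Fin m → ℝ) → (Fin m → ℝ))
    (ΔtFE ΔttFE : ℝ)
    (hF : ∀ (u : Fin m → ℝ) (τ : ℝ), 0 ≤ τ → τ ≤ ΔtFE → N (u + τ • F u) ≤ N u)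
    (hFt : ∀ (u : Fin m → ℝ) (τ : ℝ), 0 ≤ τ → τ ≤ ΔttFE → N (u - τ • Ft u) ≤ N u)
    (α : Fin k → ℝ) (β βt : Fin (k + 1) → ℝ)
    (hconsist : ∑ j, α j = 1)
    (C Ct : ℝ) (hC : 0 ≤ C) (hCt : 0 ≤ Ct)
    (hβ : ∀ j, 0 ≤ β j) (hβt : ∀ j, 0 ≤ βt j)
    (hssp : ∀ j : Fin k, 0 ≤ α j - C * β j.castSucc - Ct * βt j.castSucc)
    (Δt : ℝ) (hΔt0 : 0 ≤ Δt) (hΔt : Δt ≤ min (C * ΔtFE) (Ct * ΔttFE))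
    (uprev : Fin k → (Fin m → ℝ)) (un : Fin m → ℝ)
    (hstep : un = ∑ j : Fin k, α j • uprev j +
      Δt • ((∑ j : Fin k, (β j.castSucc • F (uprev j) - βt j.castSucc • Ft (uprev j))) +
        (β (Fin.last k) • F un - βt (Fin.last k) • Ft un))) :
    N un ≤ Finset.univ.sup' (Finset.univ_nonempty_iff.mpr ⟨⟨0, hk⟩⟩)
      (fun j : Fin k => N (uprev j)) := by
  have hN : IsSublinear N := ⟨hsub, hhom⟩
  obtain ⟨hΔtC, hΔtCt⟩ := le_min_iff.mp hΔt
  have hα : ∀ j, 0 ≤ α j := fun j => by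
    linarith [hssp j, mul_nonneg hC (hβ j.castSucc), mul_nonneg hCt (hβt j.castSucc)]
  have hstep' : un = ∑ j, (α j • uprev j +
      Δt • (β j.castSucc • F (uprev j) - βt j.castSucc • Ft (uprev j))) +
      Δt • (β (Fin.last k) • F un - βt (Fin.last k) • Ft un) := by
    rw [sum_add_distrib, ← smul_sum, add_assoc, ← smul_add]
    exact hstep
  calc N un ≤ N (∑ j, (α j • uprev j +
        Δt • (β j.castSucc • F (uprev j) - βt j.castSucc • Ft (uprev j)))) :=
        hN.le_of_implicit_step hF hFt hC hCt (hβ _) (hβt _) hΔt0 hΔtC hΔtCt hstep'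
    _ ≤ ∑ j, α j * N (uprev j) := (hN.map_sum_le _ _).trans <| sum_le_sum fun j _ =>
        hN.map_explicit_step_le hF hFt hC hCt (hβ _) (hβt _) (hssp j) hΔt0 hΔtC hΔtCt _
    _ ≤ _ := sum_mul_le_sup'_of_sum_eq_one (fun j _ => hα j) hconsist _

/-- Monotonicity of SSP perturbed linear multistep methods with different forward Euler
conditions for the upwind and downwind operators. -/
theorem stmt_4 (m k : ℕ) (hk : 0 < k) (N : (Fin m → ℝ) → ℝ)
    (hsub : ∀ u v : Fin m → ℝ, N (u + v) ≤ N u + N v)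
    (hhom : ∀ (c : ℝ) (u : Fin m → ℝ), 0 ≤ c → N (c • u) = c * N u)
    (F Ft : (Fin m → ℝ) → (Fin m → ℝ))
    (ΔtFE ΔttFE : ℝ) (hΔtFE : 0 < ΔtFE) (hΔttFE : 0 < ΔttFE)
    (hF : ∀ (u : Fin m → ℝ) (τ : ℝ), 0 ≤ τ → τ ≤ ΔtFE → N (u + τ • F u) ≤ N u)
    (hFt : ∀ (u : Fin m → ℝ) (τ : ℝ), 0 ≤ τ → τ ≤ ΔttFE → N (u - τ • Ft u) ≤ N u)
    (α : Fin k → ℝ) (β βt : Fin (k + 1) → ℝ)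
    (hconsist : ∑ j, α j = 1)
    (C Ct : ℝ) (hC : 0 ≤ C) (hCt : 0 ≤ Ct)
    (hβ : ∀ j, 0 ≤ β j) (hβt : ∀ j, 0 ≤ βt j)
    (hssp : ∀ j : Fin k, 0 ≤ α j - C * β j.castSucc - Ct * βt j.castSucc)
    (Δt : ℝ) (hΔt0 : 0 ≤ Δt) (hΔt : Δt ≤ min (C * ΔtFE) (Ct * ΔttFE))
    (uprev : Fin k → (Fin m → ℝ)) (un : Fin m → ℝ)
    (hstep : un = ∑ j : Fin k, α j • uprev j +
      Δt • ((∑ j : Fin k, (β j.castSucc • F (uprev j) - βt j.castSucc • Ft (uprev j))) +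
        (β (Fin.last k) • F un - βt (Fin.last k) • Ft un))) :
    N un ≤ Finset.univ.sup' (Finset.univ_nonempty_iff.mpr ⟨⟨0, hk⟩⟩)
      (fun j : Fin k => N (uprev j)) :=
  stmt_4_general m k hk N hsub hhom F Ft ΔtFE ΔttFE hF hFt α β βt hconsist C Ct hC hCt hβ hβt hssp
    Δt hΔt0 hΔt uprev un hstep
end

section
/- Given a k-step perturbed linear multistep method with coefficients (α, β, β̃) satisfying the SSP conditions β_j, β̃_j ≥ 0 and α_j − r β_j − r̃ β̃_j ≥ 0 (for j = 0,...,k−1) and the order-p conditions, one can construct new coefficients (α, β*, β̃*) defined by β*_j = max(β_j − β̃_j, 0) and β̃*_j = max(β̃_j − β_j, 0), which satisfy: (i) β*_j β̃*_j = 0 for every j; (ii) the same SSP conditions with the same r, r̃; (iii) the same order-p conditions; and (iv) β*_j − β̃*_j = β_j − β̃_j for all j (so both methods have the same underlying method). -/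
/-- From any SSP perturbed LMM one can construct one with `β*_j β̃*_j = 0` for all `j`,
the same SSP conditions, the same order conditions, and the same underlying method. -/
theorem stmt_5 (k p : ℕ) (α : Fin k → ℝ) (β βt : Fin (k + 1) → ℝ) (r rt : ℝ)
    (hr : 0 ≤ r) (hrt : 0 ≤ rt)
    (hβ : ∀ j, 0 ≤ β j) (hβt : ∀ j, 0 ≤ βt j)
    (hssp : ∀ j : Fin k, 0 ≤ α j - r * β j.castSucc - rt * βt j.castSucc)
    (horder1 : ∑ j, α j = 1)
    (horder2 : ∑ j : Fin k, (j : ℝ) * α j + ∑ j : Fin (k + 1), (β j - βt j) = k)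
    (horderi : ∀ i : ℕ, 2 ≤ i → i ≤ p →
      ∑ j : Fin k, α j * (j : ℝ) ^ i +
        ∑ j : Fin (k + 1), (β j - βt j) * i * (j : ℝ) ^ (i - 1) = (k : ℝ) ^ i) :
    (∀ j, max (β j - βt j) 0 * max (βt j - β j) 0 = 0) ∧
    (∀ j, 0 ≤ max (β j - βt j) 0) ∧ (∀ j, 0 ≤ max (βt j - β j) 0) ∧
    (∀ j : Fin k, 0 ≤ α j - r * max (β j.castSucc - βt j.castSucc) 0
      - rt * max (βt j.castSucc - β j.castSucc) 0) ∧
    (∑ j : Fin k, (j : ℝ) * α j +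
      ∑ j : Fin (k + 1), (max (β j - βt j) 0 - max (βt j - β j) 0) = k) ∧
    (∀ i : ℕ, 2 ≤ i → i ≤ p →
      ∑ j : Fin k, α j * (j : ℝ) ^ i +
        ∑ j : Fin (k + 1),
          (max (β j - βt j) 0 - max (βt j - β j) 0) * i * (j : ℝ) ^ (i - 1) = (k : ℝ) ^ i) ∧
    (∀ j, max (β j - βt j) 0 - max (βt j - β j) 0 = β j - βt j) := by

  have key : ∀ a b : ℝ, max (a - b) 0 - max (b - a) 0 = a - b := by
    intro a b
    rcases le_total a b with h | h
    · rw [max_eq_right (by linarith), max_eq_left (by linarith)]; ring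
    · rw [max_eq_left (by linarith), max_eq_right (by linarith)]; ring
  refine ⟨?_, fun j => le_max_right _ _, fun j => le_max_right _ _, ?_, ?_, ?_, fun j => key _ _⟩
  · intro j
    rcases le_total (β j) (βt j) with h | h
    · rw [max_eq_right (by linarith)]; ring
    · rw [max_eq_right (a := βt j - β j) (by linarith)]; ring
  · intro j
    have h1 : max (β j.castSucc - βt j.castSucc) 0 ≤ β j.castSucc :=
      max_le (by linarith [hβt j.castSucc]) (hβ j.castSucc)
    have h2 : max (βt j.castSucc - β j.castSucc) 0 ≤ βt j.castSucc :=
      max_le (by linarith [hβ j.castSucc]) (hβt j.castSucc)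
    have := hssp j
    nlinarith [mul_le_mul_of_nonneg_left h1 hr, mul_le_mul_of_nonneg_left h2 hrt]
  · simpa only [key] using horder2
  · intro i h2 hp
    simpa only [key] using horderi i h2 hp
end

section
/- Let a k-step perturbed linear multistep method have coefficients (α, β, β̃) with β_j β̃_j = 0 for all j, satisfying the order conditions of order p = 2 and the SSP conditions with coefficients r = C ≥ 0 and r̃ = C̃ = y·C for some y > 0 (i.e., β_j, β̃_j ≥ 0 and α_j − C β_j − C̃ β̃_j ≥ 0 for j = 0,...,k−1). Then C ≤ 2. -/
/-- The SSP coefficient of any second-order perturbed LMM (with `β_j β̃_j = 0`) is at most 2,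
for any positive ratio `y` of forward Euler step sizes. -/
theorem stmt_6 (k : ℕ) (hk : 1 ≤ k) (α : Fin k → ℝ) (β βt : Fin (k + 1) → ℝ)
    (C y : ℝ) (hC : 0 ≤ C) (hy : 0 < y)
    (hprod : ∀ j, β j * βt j = 0)
    (hβ : ∀ j, 0 ≤ β j) (hβt : ∀ j, 0 ≤ βt j)
    (hssp : ∀ j : Fin k, 0 ≤ α j - C * β j.castSucc - (y * C) * βt j.castSucc)
    (horder1 : ∑ j, α j = 1)
    (horder2 : ∑ j : Fin k, (j : ℝ) * α j + ∑ j : Fin (k + 1), (β j - βt j) = k)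
    (horder3 : ∑ j : Fin k, (j : ℝ) ^ 2 * α j +
      ∑ j : Fin (k + 1), 2 * (j : ℝ) * (β j - βt j) = (k : ℝ) ^ 2) :
    C ≤ 2 := by
  have hα : ∀ j : Fin k, 0 ≤ α j := fun j => by
    have h := hssp j
    have h1 := mul_nonneg hC (hβ j.castSucc)
    have h2 := mul_nonneg (mul_nonneg hy.le hC) (hβt j.castSucc)
    linarith
  have hw : ∀ j : Fin k, (1:ℝ) ≤ (k:ℝ) - j := fun j => by
    have h := j.isLt
    have : (j:ℝ) + 1 ≤ k := by exact_mod_cast h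
    linarith
  have hw' : ∀ j : Fin (k+1), (0:ℝ) ≤ (k:ℝ) - j := fun j => by
    have h := Nat.lt_succ_iff.mp j.isLt
    have : (j:ℝ) ≤ k := by exact_mod_cast h
    linarith
  have hS : ∑ j : Fin k, ((k:ℝ) - j)^2 * α j
      = ∑ j : Fin k, (j:ℝ)^2 * α j - 2*k*∑ j : Fin k, (j:ℝ) * α j + (k:ℝ)^2 * ∑ j, α j := by
    rw [Finset.mul_sum, Finset.mul_sum, ← Finset.sum_sub_distrib, ← Finset.sum_add_distrib]
    exact Finset.sum_congr rfl fun j _ => by ring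
  have hT : ∑ j : Fin (k+1), 2*((k:ℝ) - j)*(β j - βt j)
      = 2*k*∑ j : Fin (k+1), (β j - βt j) - ∑ j : Fin (k+1), 2*(j:ℝ)*(β j - βt j) := by
    rw [Finset.mul_sum, ← Finset.sum_sub_distrib]
    exact Finset.sum_congr rfl fun j _ => by ring
  have key : ∑ j : Fin k, ((k:ℝ) - j)^2 * α j
      = ∑ j : Fin (k+1), 2*((k:ℝ) - j)*(β j - βt j) := by
    rw [hS, hT]; nlinarith [horder1, horder2, horder3]
  have stepA : ∑ j : Fin (k+1), 2*((k:ℝ) - j)*(β j - βt j)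
      ≤ ∑ j : Fin (k+1), 2*((k:ℝ) - j)*(β j) := by
    apply Finset.sum_le_sum; intro j _
    have h1 := hβt j
    have h2 := hw' j
    nlinarith
  have stepB : ∑ j : Fin (k+1), 2*((k:ℝ) - j)*(β j)
      = ∑ j : Fin k, 2*((k:ℝ) - (j:ℝ))*(β j.castSucc) := by
    rw [Fin.sum_univ_castSucc]
    simp
  have stepC : C * ∑ j : Fin k, 2*((k:ℝ) - (j:ℝ))*(β j.castSucc)
      ≤ ∑ j : Fin k, 2*((k:ℝ) - j) * α j := by
    rw [Finset.mul_sum]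
    apply Finset.sum_le_sum; intro j _
    have h1 := hssp j
    have h2 := mul_nonneg (mul_nonneg hy.le hC) (hβt j.castSucc)
    have h3 := hw j
    nlinarith [hα j, mul_nonneg hC (hβ j.castSucc)]
  have stepD : C * ∑ j : Fin k, ((k:ℝ) - j) * α j
      ≤ C * ∑ j : Fin k, ((k:ℝ) - j)^2 * α j := by
    apply mul_le_mul_of_nonneg_left _ hC
    apply Finset.sum_le_sum; intro j _
    have h1 := hw j; have h2 := hα j
    nlinarith [mul_nonneg (mul_nonneg (by linarith : (0:ℝ) ≤ (k:ℝ) - (j:ℝ) - 1) (by linarith : (0:ℝ) ≤ (k:ℝ) - (j:ℝ))) h2]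
  have hA1 : (1:ℝ) ≤ ∑ j : Fin k, ((k:ℝ) - j) * α j := by
    rw [← horder1]
    apply Finset.sum_le_sum; intro j _
    have h1 := hw j; have h2 := hα j; nlinarith
  have hdouble : ∑ j : Fin k, 2*((k:ℝ) - j) * α j
      = 2 * ∑ j : Fin k, ((k:ℝ) - j) * α j := by
    rw [Finset.mul_sum]
    exact Finset.sum_congr rfl fun j _ => by ring
  have hchain : C * ∑ j : Fin k, ((k:ℝ) - j) * α j
      ≤ 2 * ∑ j : Fin k, ((k:ℝ) - j) * α j := by
    have h1 : C * ∑ j : Fin (k+1), 2*((k:ℝ) - j)*(β j - βt j)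
        ≤ C * ∑ j : Fin (k+1), 2*((k:ℝ) - j)*(β j) :=
      mul_le_mul_of_nonneg_left stepA hC
    rw [stepB] at h1
    calc C * ∑ j : Fin k, ((k:ℝ) - j) * α j
        ≤ C * ∑ j : Fin k, ((k:ℝ) - j)^2 * α j := stepD
      _ = C * ∑ j : Fin (k+1), 2*((k:ℝ) - j)*(β j - βt j) := by rw [key]
      _ ≤ C * ∑ j : Fin k, 2*((k:ℝ) - (j:ℝ))*(β j.castSucc) := h1
      _ ≤ ∑ j : Fin k, 2*((k:ℝ) - j) * α j := stepC
      _ = 2 * ∑ j : Fin k, ((k:ℝ) - j) * α j := hdouble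
  nlinarith [hchain, hA1]
end

section
/- Let a k-step perturbed linear multistep method have coefficients (α, β, β̃) with β_j β̃_j = 0 for all j, satisfying the second-order conditions and the SSP conditions with coefficients r = C ≥ 0 and r̃ = 0 (the case y = 0). Then C ≤ 2. -/
/-- The SSP coefficient of any second-order perturbed LMM (with `β_j β̃_j = 0`) is at most 2,
in the case `y = 0` where the SSP condition only involves `β`. -/
theorem stmt_7 (k : ℕ) (hk : 1 ≤ k) (α : Fin k → ℝ) (β βt : Fin (k + 1) → ℝ)
    (C : ℝ) (hC : 0 ≤ C)
    (hprod : ∀ j, β j * βt j = 0)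
    (hβ : ∀ j, 0 ≤ β j) (hβt : ∀ j, 0 ≤ βt j)
    (hssp : ∀ j : Fin k, 0 ≤ α j - C * β j.castSucc)
    (horder1 : ∑ j, α j = 1)
    (horder2 : ∑ j : Fin k, (j : ℝ) * α j + ∑ j : Fin (k + 1), (β j - βt j) = k)
    (horder3 : ∑ j : Fin k, (j : ℝ) ^ 2 * α j +
      ∑ j : Fin (k + 1), 2 * (j : ℝ) * (β j - βt j) = (k : ℝ) ^ 2) :
    C ≤ 2 := by
  by_contra hC2
  push_neg at hC2
  have hw : ∀ j : Fin k, (1:ℝ) ≤ (k:ℝ) - j := by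
    intro j
    have hj := j.isLt
    have : ((j:ℕ):ℝ) + 1 ≤ (k:ℝ) := by exact_mod_cast hj
    linarith
  have h1 : ∑ j : Fin k, ((k:ℝ)-j)^2 * α j
      = (k:ℝ)^2 * (∑ j, α j) - 2*k*(∑ j : Fin k, (j:ℝ)*α j)
        + ∑ j : Fin k, (j:ℝ)^2 * α j := by
    rw [Finset.mul_sum, Finset.mul_sum, ← Finset.sum_sub_distrib, ← Finset.sum_add_distrib]
    exact Finset.sum_congr rfl fun j _ => by ring
  have h2 : ∑ j : Fin (k+1), 2*((k:ℝ)-j)*(β j - βt j)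
      = 2*k*(∑ j : Fin (k+1), (β j - βt j))
        - ∑ j : Fin (k+1), 2*(j:ℝ)*(β j - βt j) := by
    rw [Finset.mul_sum, ← Finset.sum_sub_distrib]
    exact Finset.sum_congr rfl fun j _ => by ring
  have key : ∑ j : Fin k, ((k:ℝ)-j)^2 * α j
      = ∑ j : Fin (k+1), 2*((k:ℝ)-j)*(β j - βt j) := by
    rw [h1, h2]
    linear_combination (k:ℝ)^2*horder1 - 2*(k:ℝ)*horder2 + horder3
  have h3 : ∑ j : Fin (k+1), 2*((k:ℝ)-j)*(β j - βt j)
      ≤ ∑ j : Fin k, 2*((k:ℝ)-j)*(β j.castSucc) := by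
    rw [Fin.sum_univ_castSucc]
    have hlast : 2*((k:ℝ)-((Fin.last k : Fin (k+1)):ℝ))*(β (Fin.last k) - βt (Fin.last k)) = 0 := by
      simp
    rw [hlast, add_zero]
    apply Finset.sum_le_sum
    intro j _
    have hw' := hw j
    have hb := hβt j.castSucc
    have hc : ((j.castSucc : Fin (k+1)) : ℝ) = (j:ℝ) := by simp
    rw [hc]
    nlinarith
  have h4 : ∑ j : Fin k, 2*((k:ℝ)-j)*(β j.castSucc)
      ≤ 2 * ∑ j : Fin k, ((k:ℝ)-j)^2*(β j.castSucc) := by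
    rw [Finset.mul_sum]
    apply Finset.sum_le_sum
    intro j _
    have h0 : (0:ℝ) ≤ (k:ℝ)-(j:ℝ)-1 := by have := hw j; linarith
    have h0' : (0:ℝ) ≤ (k:ℝ)-(j:ℝ) := by have := hw j; linarith
    nlinarith [mul_nonneg (mul_nonneg h0 h0') (hβ j.castSucc)]
  have h5 : C * ∑ j : Fin k, ((k:ℝ)-j)^2*(β j.castSucc)
      ≤ ∑ j : Fin k, ((k:ℝ)-j)^2 * α j := by
    rw [Finset.mul_sum]
    apply Finset.sum_le_sum
    intro j _
    have := hssp j
    have := hw j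
    nlinarith
  have hS0 : 0 ≤ ∑ j : Fin k, ((k:ℝ)-j)^2*(β j.castSucc) := Finset.sum_nonneg fun j _ => by
    have := hw j; have := hβ j.castSucc; nlinarith
  have hCS : C * ∑ j : Fin k, ((k:ℝ)-j)^2*(β j.castSucc) ≤ 2 * ∑ j : Fin k, ((k:ℝ)-j)^2*(β j.castSucc) := by
    calc C * ∑ j : Fin k, ((k:ℝ)-j)^2*(β j.castSucc) ≤ ∑ j : Fin k, ((k:ℝ)-j)^2 * α j := h5
      _ = ∑ j : Fin (k+1), 2*((k:ℝ)-j)*(β j - βt j) := key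
      _ ≤ ∑ j : Fin k, 2*((k:ℝ)-j)*(β j.castSucc) := h3
      _ ≤ _ := h4
  have hSz : ∑ j : Fin k, ((k:ℝ)-j)^2*(β j.castSucc) = 0 := by nlinarith
  have hnnS : ∀ i ∈ (Finset.univ : Finset (Fin k)), 0 ≤ ((k:ℝ)-i)^2*(β i.castSucc) := by
    intro i _
    have := hw i; have := hβ i.castSucc; nlinarith
  have hβz : ∀ j : Fin k, β j.castSucc = 0 := by
    intro j
    have hterm := (Finset.sum_eq_zero_iff_of_nonneg hnnS).mp hSz j (Finset.mem_univ j)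
    rcases mul_eq_zero.mp hterm with h | h
    · exfalso
      have h0 : (k:ℝ)-(j:ℝ) = 0 := pow_eq_zero_iff two_ne_zero |>.mp h
      have := hw j; linarith
    · exact h
  have hnn : ∀ i ∈ (Finset.univ : Finset (Fin k)), 0 ≤ ((k:ℝ)-i)^2 * α i := by
    intro i _
    have hs := hssp i
    rw [hβz i, mul_zero, sub_zero] at hs
    exact mul_nonneg (sq_nonneg _) hs
  have hsum0 : ∑ j : Fin k, ((k:ℝ)-j)^2 * α j = 0 := by
    have hle : ∑ j : Fin k, ((k:ℝ)-j)^2 * α j ≤ 0 := by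
      rw [key]
      calc _ ≤ ∑ j : Fin k, 2*((k:ℝ)-j)*(β j.castSucc) := h3
        _ ≤ 2 * ∑ j : Fin k, ((k:ℝ)-j)^2*(β j.castSucc) := h4
        _ = 0 := by rw [hSz]; ring
    have hge : 0 ≤ ∑ j : Fin k, ((k:ℝ)-j)^2 * α j := Finset.sum_nonneg hnn
    linarith
  have hαz : ∀ j : Fin k, α j = 0 := by
    intro j
    have hterm := (Finset.sum_eq_zero_iff_of_nonneg hnn).mp hsum0 j (Finset.mem_univ j)
    rcases mul_eq_zero.mp hterm with h | h
    · exfalso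
      have h0 : (k:ℝ)-(j:ℝ) = 0 := pow_eq_zero_iff two_ne_zero |>.mp h
      have := hw j; linarith
    · exact h
  rw [Finset.sum_congr rfl (fun j _ => hαz j)] at horder1
  simp at horder1
end

section
/- Let [0,1] be invariant for a map u ↦ u + Δt D(u) for 0 ≤ Δt ≤ τ and for u ↦ u + Δt S(u) for 0 ≤ Δt ≤ 2/μ (componentwise for u ∈ [0,1]^m, where D, S : ℝ^m → ℝ^m), with τ, μ > 0. Then [0,1]^m is invariant for u ↦ u + Δt (D(u) + S(u)) for all 0 ≤ Δt ≤ 2τ/(2 + μτ). -/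
/-!
If `x + ε₁ • F` and `x + ε₂ • G` lie in a convex set, so does `x + ε • (F + G)` with
`ε⁻¹ = ε₁⁻¹ + ε₂⁻¹`, being the convex combination with weights `ε / ε₁` and `ε / ε₂`; since
the set also contains `x`, it then contains `x + t • (F + G)` for every `t ∈ [0, ε]`.
Here `ε₁ = τ`, `ε₂ = 2 / μ` and `ε = 2τ / (2 + μτ)`.
-/

namespace Convex

variable {E : Type*} [AddCommGroup E] [Module ℝ E] {K : Set E}

theorem add_smul_add_mem (hK : Convex ℝ K) {x F G : E} {a b : ℝ} (ha : 0 < a) (hb : 0 < b)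
    (hF : x + a • F ∈ K) (hG : x + b • G ∈ K) : x + (a⁻¹ + b⁻¹)⁻¹ • (F + G) ∈ K := by
  set ε := (a⁻¹ + b⁻¹)⁻¹
  have hweights : ε / a + ε / b = 1 := by
    simp only [ε, div_eq_mul_inv, ← mul_add]
    exact inv_mul_cancel₀ (by positivity)
  have hcomb : (ε / a) • (x + a • F) + (ε / b) • (x + b • G) = x + ε • (F + G) := by
    match_scalars
    · simpa using hweights
    all_goals field_simp
  rw [← hcomb]
  exact hK hF hG (by positivity) (by positivity) hweights

theorem add_smul_add_mem_of_le (hK : Convex ℝ K) {x F G : E} {a b t : ℝ} (hx : x ∈ K)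
    (ha : 0 < a) (hb : 0 < b) (hF : x + a • F ∈ K) (hG : x + b • G ∈ K)
    (ht₀ : 0 ≤ t) (ht : t ≤ (a⁻¹ + b⁻¹)⁻¹) : x + t • (F + G) ∈ K := by
  have hε : 0 < (a⁻¹ + b⁻¹)⁻¹ := by positivity
  have hscale := hK.add_smul_mem hx (hK.add_smul_add_mem ha hb hF hG)
    (t := t / (a⁻¹ + b⁻¹)⁻¹) ⟨by positivity, (div_le_one hε).2 ht⟩
  rwa [smul_smul, div_mul_cancel₀ _ hε.ne'] at hscale

end Convex

/-- If `[0,1]^m` is invariant for `u ↦ u + Δt D(u)` for `0 ≤ Δt ≤ τ` and for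
`u ↦ u + Δt S(u)` for `0 ≤ Δt ≤ 2/μ`, then it is invariant for
`u ↦ u + Δt (D(u) + S(u))` for `0 ≤ Δt ≤ 2τ/(2 + μτ)`. -/
theorem stmt_15 (m : ℕ) (D S : (Fin m → ℝ) → (Fin m → ℝ)) (τ μ : ℝ)
    (hτ : 0 < τ) (hμ : 0 < μ)
    (hD : ∀ u : Fin m → ℝ, (∀ i, u i ∈ Set.Icc (0 : ℝ) 1) →
      ∀ Δt : ℝ, 0 ≤ Δt → Δt ≤ τ → ∀ i, (u + Δt • D u) i ∈ Set.Icc (0 : ℝ) 1)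
    (hS : ∀ u : Fin m → ℝ, (∀ i, u i ∈ Set.Icc (0 : ℝ) 1) →
      ∀ Δt : ℝ, 0 ≤ Δt → Δt ≤ 2 / μ → ∀ i, (u + Δt • S u) i ∈ Set.Icc (0 : ℝ) 1) :
    ∀ u : Fin m → ℝ, (∀ i, u i ∈ Set.Icc (0 : ℝ) 1) →
      ∀ Δt : ℝ, 0 ≤ Δt → Δt ≤ 2 * τ / (2 + μ * τ) →
        ∀ i, (u + Δt • (D u + S u)) i ∈ Set.Icc (0 : ℝ) 1 := by
  intro u hu Δt hΔt₀ hΔt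
  have hcube : Convex ℝ (Set.univ.pi fun _ : Fin m ↦ Set.Icc (0 : ℝ) 1) :=
    convex_pi fun _ _ ↦ convex_Icc 0 1
  have hharmonic : 2 * τ / (2 + μ * τ) = (τ⁻¹ + (2 / μ)⁻¹)⁻¹ := by
    field_simp
  have h2μ : 0 < 2 / μ := div_pos two_pos hμ
  exact Set.mem_univ_pi.1 <| hcube.add_smul_add_mem_of_le (Set.mem_univ_pi.2 hu) hτ h2μ
    (Set.mem_univ_pi.2 (hD u hu τ hτ.le le_rfl)) (Set.mem_univ_pi.2 (hS u hu _ h2μ.le le_rfl))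
    hΔt₀ (hΔt.trans_eq hharmonic)
end
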